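/- arXiv:1610.06455 — 2 statements merged into one kernel-verified Lean document; each statement's English description precedes it below -/
import Mathlib

section
/- Define $\theta_\varphi=\min\{s\in[0,1]:\varphi\in\mathbf{H}_{\alpha,\beta,V}(s)\}$ for $\varphi\in\mathbf{H}_{\alpha,\beta,V}(1)$. If $\varphi_n,\varphi\in\mathbf{H}_{\alpha,\beta,V}(1)$ and $\sup_{\nu\in S^{d-1}}|\varphi_n(\nu)-\varphi(\nu)|\to0$, then $\theta_{\varphi_n}\to\theta_\varphi$. -/
open Finset

/-- The dot product of `ν ∈ ℝ^d` with an integer vector `ξ ∈ ℤ^d`. -/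
noncomputable def dotZ {d : ℕ} (ν : Fin d → ℝ) (ξ : Fin d → ℤ) : ℝ :=
  ∑ k, ν k * (ξ k : ℝ)

/-- The class `H_{α,β,V}(θ)` via its characterization by optimal bounds. -/
def memH {d : ℕ} (V : Finset (Fin d → ℤ)) (α β : (Fin d → ℤ) → ℝ) (θ : ℝ)
    (φ : (Fin d → ℝ) → ℝ) : Prop :=
  (∀ ν, φ (-ν) = φ ν) ∧ ConvexOn ℝ Set.univ φ ∧
    (∀ t : ℝ, 0 ≤ t → ∀ ν, φ (t • ν) = t * φ ν) ∧
    ∃ θξ : (Fin d → ℤ) → ℝ, (∀ ξ ∈ V, θξ ξ ∈ Set.Icc (0:ℝ) 1) ∧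
      (∑ ξ ∈ V, θξ ξ) / (V.card : ℝ) = θ ∧
      ∀ ν, (∑ ξ ∈ V, α ξ * |dotZ ν ξ|) ≤ φ ν ∧
        φ ν ≤ ∑ ξ ∈ V, (θξ ξ * β ξ + (1 - θξ ξ) * α ξ) * |dotZ ν ξ|

/-- The minimal volume fraction `θ_φ = min { s ∈ [0,1] : φ ∈ H_{α,β,V}(s) }`. -/
noncomputable def thetaMin {d : ℕ} (V : Finset (Fin d → ℤ))
    (α β : (Fin d → ℤ) → ℝ) (φ : (Fin d → ℝ) → ℝ) : ℝ :=
  sInf {s : ℝ | s ∈ Set.Icc (0:ℝ) 1 ∧ memH V α β s φ}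

/-!
Lower semicontinuity of `θ_φ` is compactness: the admissible fractions `θξ ∈ [0,1]^V` of the `φₙ`
have a convergent subsequence, and the upper bounds pass to the pointwise limit.

Upper semicontinuity is an openness property. Raising each `θξ` of `φ` to `θξ + t (1 - θξ)` enlarges
the upper bound by `t ∑ (1 - θξ) (β ξ - α ξ) |ν ⬝ ξ|`, which only controls `ν` away from the
hyperplanes `ν ⬝ ξ = 0` with `θξ < 1`. So split `ν = y + (ν - y)` with `y` on these hyperplanes,
without cancellation in the other `ν ⬝ ξ`, and with `‖ν - y‖ ≤ C ∑_{θξ < 1} |ν ⬝ ξ|`; such a split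
is Hoffman's error bound for a polyhedron, which follows from Farkas' lemma and Carathéodory's
theorem for cones. Subadditivity of `φₙ`, the bound `φₙ ≤ ∑ β ξ |ν ⬝ ξ|` at `y`, and
`|φₙ - φ| ≤ δ ‖·‖` at `ν - y` then put `φₙ` in the class of the raised fraction.
-/

open Filter Topology RealInnerProductSpace

section Caratheodory

variable {𝕜 M ι : Type*} [Field 𝕜] [LinearOrder 𝕜] [IsStrictOrderedRing 𝕜]
  [AddCommGroup M] [Module 𝕜 M] [DecidableEq ι]

theorem exists_erase_nonneg_repr_of_not_linearIndepOn {a : ι → M} {A : Finset ι} {c : ι → 𝕜}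
    (hc : ∀ i ∈ A, 0 ≤ c i) (hA : ¬LinearIndepOn 𝕜 a A) :
    ∃ i ∈ A, ∃ c' : ι → 𝕜, (∀ j ∈ A.erase i, 0 ≤ c' j) ∧
      ∑ j ∈ A.erase i, c' j • a j = ∑ j ∈ A, c j • a j := by
  have hrel : ∃ g : ι → 𝕜, ∑ j ∈ A, g j • a j = 0 ∧ ∃ i ∈ A, 0 < g i := by
    obtain ⟨g, hg, i, hi, hgi⟩ := not_linearIndepOn_finset_iff.1 hA
    rcases hgi.lt_or_gt with hneg | hpos
    · exact ⟨-g, by simp [hg], i, hi, by simpa using hneg⟩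
    · exact ⟨g, hg, i, hi, hpos⟩
  obtain ⟨g, hg, hpos⟩ := hrel
  have hQ : (A.filter (0 < g ·)).Nonempty := by simpa [Finset.filter_nonempty_iff] using hpos
  -- Subtract the largest multiple of the relation `g` that keeps all coefficients nonnegative.
  obtain ⟨i, hiQ, hmin⟩ := (A.filter (0 < g ·)).exists_min_image (fun j => c j / g j) hQ
  obtain ⟨hiA, hgi⟩ := Finset.mem_filter.1 hiQ
  set t := c i / g i
  have ht : 0 ≤ t := div_nonneg (hc i hiA) hgi.le
  refine ⟨i, hiA, fun j => c j - t * g j, fun j hj => ?_, ?_⟩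
  · have hjA := Finset.mem_of_mem_erase hj
    rcases le_or_gt (g j) 0 with hgj | hgj
    · nlinarith [hc j hjA]
    · have := hmin j (Finset.mem_filter.2 ⟨hjA, hgj⟩)
      rw [le_div_iff₀ hgj] at this
      linarith
  · rw [Finset.sum_erase _ (by simp [t, div_mul_cancel₀ _ hgi.ne'])]
    simp only [sub_smul, Finset.sum_sub_distrib, mul_smul, ← Finset.smul_sum, hg, smul_zero,
      sub_zero]

/-- Carathéodory's theorem for cones. -/
theorem exists_linearIndepOn_nonneg_repr (a : ι → M) (A : Finset ι) (c : ι → 𝕜)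
    (hc : ∀ i ∈ A, 0 ≤ c i) :
    ∃ J ⊆ A, LinearIndepOn 𝕜 a J ∧ ∃ c' : ι → 𝕜, (∀ j ∈ J, 0 ≤ c' j) ∧
      ∑ j ∈ J, c' j • a j = ∑ j ∈ A, c j • a j := by
  induction A using Finset.strongInduction generalizing c with
  | H A ih =>
    by_cases hA : LinearIndepOn 𝕜 a A
    · exact ⟨A, subset_rfl, hA, c, hc, rfl⟩
    obtain ⟨i, hi, c', hc', hsum⟩ := exists_erase_nonneg_repr_of_not_linearIndepOn hc hA
    obtain ⟨J, hJ, hJind, c'', hc'', hsum'⟩ := ih _ (Finset.erase_ssubset hi) c' hc'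
    exact ⟨J, hJ.trans (Finset.erase_subset _ _), hJind, c'', hc'', hsum'.trans hsum⟩

end Caratheodory

section FiniteCone

variable {E ι : Type*} [AddCommGroup E] [Module ℝ E]

def finiteCone (a : ι → E) (A : Finset ι) : Set E :=
  {x | ∃ c : ι → ℝ, (∀ i ∈ A, 0 ≤ c i) ∧ ∑ i ∈ A, c i • a i = x}

theorem zero_mem_finiteCone (a : ι → E) (A : Finset ι) : 0 ∈ finiteCone a A :=
  ⟨0, fun _ _ => le_rfl, by simp⟩

theorem smul_mem_finiteCone [DecidableEq ι] (a : ι → E) {A : Finset ι} {i : ι} (hi : i ∈ A)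
    {t : ℝ} (ht : 0 ≤ t) : t • a i ∈ finiteCone a A :=
  ⟨fun j => if j = i then t else 0, fun j _ => by dsimp only; split_ifs <;> simp [ht],
    by simp [hi]⟩

theorem convex_finiteCone (a : ι → E) (A : Finset ι) : Convex ℝ (finiteCone a A) := by
  rintro _ ⟨c, hc, rfl⟩ _ ⟨c', hc', rfl⟩ s t hs ht -
  refine ⟨fun i => s * c i + t * c' i, fun i hi => by have := hc i hi; have := hc' i hi; positivity,
    ?_⟩
  simp only [add_smul, mul_smul, Finset.sum_add_distrib, Finset.smul_sum]

end FiniteCone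

section BoundedRepr

variable {F ι : Type*} [NormedAddCommGroup F] [NormedSpace ℝ F]

theorem LinearIndepOn.exists_abs_le_mul_norm {a : ι → F} {J : Finset ι}
    (hJ : LinearIndepOn ℝ a J) :
    ∃ C, ∀ c : ι → ℝ, ∀ i ∈ J, |c i| ≤ C * ‖∑ j ∈ J, c j • a j‖ := by
  set L := Fintype.linearCombination ℝ (fun j : J => a j)
  have hker : LinearMap.ker L = ⊥ :=
    LinearMap.ker_eq_bot.2 hJ.fintypeLinearCombination_injective
  obtain ⟨K, -, hK⟩ := L.exists_antilipschitzWith hker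
  refine ⟨K, fun c i hi => ?_⟩
  have hL : L (fun j => c j) = ∑ j ∈ J, c j • a j := by
    simp [L, Fintype.linearCombination_apply, Finset.sum_attach J (fun j => c j • a j)]
  calc |c i| = ‖(fun j : J => c j) ⟨i, hi⟩‖ := (Real.norm_eq_abs _).symm
    _ ≤ ‖(fun j : J => c j)‖ := norm_le_pi_norm (fun j : J => c j) ⟨i, hi⟩
    _ ≤ K * ‖L (fun j => c j)‖ := by simpa using hK.le_mul_dist (fun j : J => c j) 0
    _ = K * ‖∑ j ∈ J, c j • a j‖ := by rw [hL]

variable [DecidableEq ι]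

theorem exists_bounded_nonneg_repr (a : ι → F) (A : Finset ι) :
    ∃ C > 0, ∀ B ⊆ A, ∀ c : ι → ℝ, (∀ i ∈ B, 0 ≤ c i) →
      ∃ J ⊆ B, ∃ c' : ι → ℝ, (∀ j ∈ J, 0 ≤ c' j ∧ c' j ≤ C * ‖∑ i ∈ B, c i • a i‖) ∧
        ∑ j ∈ J, c' j • a j = ∑ i ∈ B, c i • a i := by
  have hbound : ∀ J ∈ A.powerset, ∀ᶠ C in atTop, LinearIndepOn ℝ a J →
      ∀ c : ι → ℝ, ∀ i ∈ J, |c i| ≤ C * ‖∑ j ∈ J, c j • a j‖ := by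
    intro J _
    by_cases hind : LinearIndepOn ℝ a J
    · obtain ⟨C₀, hC₀⟩ := hind.exists_abs_le_mul_norm
      filter_upwards [eventually_ge_atTop C₀] with C hC _ c i hi
      exact (hC₀ c i hi).trans (by gcongr)
    · exact Eventually.of_forall fun _ h => absurd h hind
  obtain ⟨C, hC, hpos⟩ :=
    (((eventually_all_finset _).2 hbound).and (eventually_gt_atTop 0)).exists
  refine ⟨C, hpos, fun B hB c hc => ?_⟩
  obtain ⟨J, hJB, hind, c', hc', hsum⟩ := exists_linearIndepOn_nonneg_repr a B c hc
  refine ⟨J, hJB, c', fun j hj => ⟨hc' j hj, ?_⟩, hsum⟩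
  rw [← hsum]
  exact (le_abs_self _).trans (hC J (Finset.mem_powerset.2 (hJB.trans hB)) hind c' j hj)

end BoundedRepr

theorem abs_add_abs_sub_eq_abs {x c : ℝ} (hx : min 0 c ≤ x ∧ x ≤ max 0 c) :
    |x| + |c - x| = |c| := by
  rcases le_total 0 c with hc | hc
  · rw [min_eq_left hc, max_eq_right hc] at hx
    rw [abs_of_nonneg hx.1, abs_of_nonneg (by linarith), abs_of_nonneg hc]
    ring
  · rw [min_eq_right hc, max_eq_left hc] at hx
    rw [abs_of_nonpos hx.2, abs_of_nonpos (by linarith), abs_of_nonpos hc]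
    ring

section Polyhedron

variable {F ι κ : Type*} [NormedAddCommGroup F] [InnerProductSpace ℝ F]

theorem convex_polyhedron (e : κ → F) (b : κ → ℝ) (A : Finset κ) :
    Convex ℝ {y | ∀ p ∈ A, ⟪e p, y⟫ ≤ b p} := by
  intro x hx y hy s t hs ht hst p hp
  rw [inner_add_right, real_inner_smul_right, real_inner_smul_right]
  have hxp : ⟪e p, x⟫ ≤ b p := hx p hp
  have hyp : ⟪e p, y⟫ ≤ b p := hy p hp
  calc s * ⟪e p, x⟫ + t * ⟪e p, y⟫ ≤ s * b p + t * b p := by gcongr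
    _ = b p := by rw [← add_mul, hst, one_mul]

theorem isClosed_polyhedron (e : κ → F) (b : κ → ℝ) (A : Finset κ) :
    IsClosed {y | ∀ p ∈ A, ⟪e p, y⟫ ≤ b p} := by
  have : {y | ∀ p ∈ A, ⟪e p, y⟫ ≤ b p} = ⋂ p ∈ A, {y | ⟪e p, y⟫ ≤ b p} := by ext; simp
  rw [this]
  exact isClosed_biInter fun p _ => isClosed_le (by fun_prop) continuous_const

/-- `hz` says that `z` lies in the tangent cone of the polyhedron at `y`. -/
theorem inner_nonpos_of_mem_tangentCone {e : κ → F} {b : κ → ℝ} {A : Finset κ} {y v z : F}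
    (hy : ∀ p ∈ A, ⟪e p, y⟫ ≤ b p)
    (hv : ∀ x, (∀ p ∈ A, ⟪e p, x⟫ ≤ b p) → ⟪v, x - y⟫ ≤ 0)
    (hz : ∀ p ∈ A, ⟪e p, y⟫ = b p → ⟪e p, z⟫ ≤ 0) : ⟪v, z⟫ ≤ 0 := by
  have hstep : ∀ᶠ t in 𝓝[>] (0 : ℝ), ∀ p ∈ A, ⟪e p, y + t • z⟫ ≤ b p := by
    refine (eventually_all_finset A).2 fun p hp => ?_
    rcases (hy p hp).lt_or_eq with hlt | heq
    · have hcont : Continuous fun t : ℝ => ⟪e p, y + t • z⟫ := by fun_prop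
      exact nhdsWithin_le_nhds <| (hcont.continuousAt.eventually_lt continuousAt_const
        (by simpa using hlt)).mono fun _ h => h.le
    · filter_upwards [self_mem_nhdsWithin] with t (ht : 0 < t)
      rw [inner_add_right, real_inner_smul_right]
      nlinarith [hz p hp heq]
  obtain ⟨t, ht, ht0 : 0 < t⟩ := (hstep.and self_mem_nhdsWithin).exists
  have := hv _ ht
  rw [add_sub_cancel_left, real_inner_smul_right] at this
  exact nonpos_of_mul_nonpos_right this ht0

variable [CompleteSpace F]

/-- Farkas' lemma. Passing to the closure spares proving that finitely generated cones are
closed. -/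
theorem mem_closure_finiteCone_of_inner_nonpos {a : ι → F} {A : Finset ι} {v : F}
    (hv : ∀ z, (∀ i ∈ A, ⟪a i, z⟫ ≤ 0) → ⟪v, z⟫ ≤ 0) : v ∈ closure (finiteCone a A) := by
  classical
  by_contra hvA
  obtain ⟨f, u, hf, hu⟩ :=
    geometric_hahn_banach_closed_point (convex_finiteCone a A).closure isClosed_closure hvA
  have hu0 : 0 < u := by simpa using hf 0 (subset_closure (zero_mem_finiteCone a A))
  have hfa : ∀ i ∈ A, f (a i) ≤ 0 := fun i hi => by
    by_contra! hpos
    have := hf _ (subset_closure (smul_mem_finiteCone a hi (div_pos hu0 hpos).le))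
    rw [map_smul, smul_eq_mul, div_mul_cancel₀ _ hpos.ne'] at this
    exact this.false
  set w := (InnerProductSpace.toDual ℝ F).symm f
  have hw : ∀ x, ⟪x, w⟫ = f x := fun x => by
    rw [real_inner_comm]; exact InnerProductSpace.toDual_symm_apply
  have := hv w fun i hi => (hw _).trans_le (hfa i hi)
  rw [hw] at this
  linarith

/-- Hoffman's error bound for polyhedra, with `w` any bound on the violated constraints at `ν`. -/
theorem exists_hoffman_bound [DecidableEq κ] (e : κ → F) (A : Finset κ) :
    ∃ C > 0, ∀ (b w : κ → ℝ) (ν : F), (∃ y, ∀ p ∈ A, ⟪e p, y⟫ ≤ b p) →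
      (∀ p ∈ A, 0 ≤ w p ∧ ⟪e p, ν⟫ - b p ≤ w p) →
      ∃ y, (∀ p ∈ A, ⟪e p, y⟫ ≤ b p) ∧ ‖ν - y‖ ≤ C * ∑ p ∈ A, w p := by
  obtain ⟨C, hC, hrepr⟩ := exists_bounded_nonneg_repr e A
  refine ⟨C, hC, fun b w ν hne hw => ?_⟩
  obtain ⟨y, hy, hmin⟩ := exists_norm_eq_iInf_of_complete_convex hne
    (isClosed_polyhedron e b A).isComplete (convex_polyhedron e b A) ν
  have hvar := (norm_eq_iInf_iff_real_inner_le_zero (convex_polyhedron e b A) hy).1 hmin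
  refine ⟨y, hy, ?_⟩
  set W := ∑ p ∈ A, w p
  have hW : 0 ≤ W := Finset.sum_nonneg fun p hp => (hw p hp).1
  set act := A.filter fun p => ⟪e p, y⟫ = b p
  have hcone : ∀ x ∈ finiteCone e act, ⟪x, ν - y⟫ ≤ C * W * ‖x‖ := by
    rintro x ⟨c, hc, rfl⟩
    obtain ⟨J, hJ, c', hc', hsum⟩ := hrepr act (Finset.filter_subset _ _) c hc
    have hJA : J ⊆ A := hJ.trans (Finset.filter_subset _ _)
    have hviol : ∀ j ∈ J, ⟪e j, ν - y⟫ ≤ w j := fun j hj => by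
      rw [inner_sub_right, (Finset.mem_filter.1 (hJ hj)).2]
      exact (hw j (hJA hj)).2
    calc ⟪∑ i ∈ act, c i • e i, ν - y⟫ = ∑ j ∈ J, c' j * ⟪e j, ν - y⟫ := by
          rw [← hsum, sum_inner]; simp only [real_inner_smul_left]
      _ ≤ ∑ j ∈ J, C * ‖∑ i ∈ act, c i • e i‖ * w j := Finset.sum_le_sum fun j hj =>
          (mul_le_mul_of_nonneg_left (hviol j hj) (hc' j hj).1).trans
            (mul_le_mul_of_nonneg_right (hc' j hj).2 (hw j (hJA hj)).1)
      _ ≤ C * ‖∑ i ∈ act, c i • e i‖ * W := by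
          rw [← Finset.mul_sum]
          gcongr
          exact Finset.sum_le_sum_of_subset_of_nonneg hJA fun p hp _ => (hw p hp).1
      _ = C * W * ‖∑ i ∈ act, c i • e i‖ := by ring
  have hclosure : ν - y ∈ closure (finiteCone e act) :=
    mem_closure_finiteCone_of_inner_nonpos fun z hz => inner_nonpos_of_mem_tangentCone hy hvar
      fun p hp heq => hz p (Finset.mem_filter.2 ⟨hp, heq⟩)
  have hsq : ⟪ν - y, ν - y⟫ ≤ C * W * ‖ν - y‖ :=
    closure_minimal hcone (isClosed_le (f := fun x => ⟪x, ν - y⟫)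
      (g := fun x => C * W * ‖x‖) (by fun_prop) (by fun_prop)) hclosure
  rw [real_inner_self_eq_norm_sq, sq] at hsq
  rcases (norm_nonneg (ν - y)).eq_or_lt with h0 | hpos
  · rw [← h0]; positivity
  · exact le_of_mul_le_mul_right hsq hpos

theorem exists_hoffman_bound_two_sided [DecidableEq ι] (a : ι → F) (B : Finset ι) :
    ∃ C > 0, ∀ (l u w : ι → ℝ) (ν : F), (∃ y, ∀ i ∈ B, l i ≤ ⟪a i, y⟫ ∧ ⟪a i, y⟫ ≤ u i) →
      (∀ i ∈ B, 0 ≤ w i ∧ ⟪a i, ν⟫ - u i ≤ w i ∧ l i - ⟪a i, ν⟫ ≤ w i) →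
      ∃ y, (∀ i ∈ B, l i ≤ ⟪a i, y⟫ ∧ ⟪a i, y⟫ ≤ u i) ∧ ‖ν - y‖ ≤ C * ∑ i ∈ B, w i := by
  obtain ⟨C, hC, hoff⟩ := exists_hoffman_bound (Sum.elim a fun i => -a i) (B.disjSum B)
  refine ⟨C * 2, by positivity, fun l u w ν ⟨y₀, hy₀⟩ hw => ?_⟩
  have hfeas : ∃ y, ∀ p ∈ B.disjSum B,
      ⟪Sum.elim a (fun i => -a i) p, y⟫ ≤ Sum.elim u (fun i => -l i) p := by
    refine ⟨y₀, ?_⟩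
    rintro (i | i) hi <;> simp only [Finset.inl_mem_disjSum, Finset.inr_mem_disjSum] at hi <;>
      simp [(hy₀ i hi).1, (hy₀ i hi).2]
  have hviol : ∀ p ∈ B.disjSum B, 0 ≤ Sum.elim w w p ∧
      ⟪Sum.elim a (fun i => -a i) p, ν⟫ - Sum.elim u (fun i => -l i) p ≤ Sum.elim w w p := by
    rintro (i | i) hi <;> simp only [Finset.inl_mem_disjSum, Finset.inr_mem_disjSum] at hi <;>
      simp only [Sum.elim_inl, Sum.elim_inr, inner_neg_left] <;>
      exact ⟨(hw i hi).1, by linarith [(hw i hi).2]⟩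
  obtain ⟨y, hy, hnorm⟩ := hoff _ _ ν hfeas hviol
  refine ⟨y, fun i hi => ⟨?_, ?_⟩, ?_⟩
  · simpa using hy (Sum.inr i) (Finset.inr_mem_disjSum.2 hi)
  · simpa using hy (Sum.inl i) (Finset.inl_mem_disjSum.2 hi)
  · simpa only [Finset.sum_disjSum, Sum.elim_inl, Sum.elim_inr, ← two_mul, ← mul_assoc,
      mul_comm 2 C] using hnorm

theorem exists_conformal_decomposition [DecidableEq ι] (a : ι → F) (P A : Finset ι) :
    ∃ C > 0, ∀ ν : F, ∃ y, (∀ i ∈ P, ⟪a i, y⟫ = 0) ∧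
      (∀ i ∈ A, |⟪a i, y⟫| + |⟪a i, ν - y⟫| = |⟪a i, ν⟫|) ∧
      ‖ν - y‖ ≤ C * ∑ i ∈ P, |⟪a i, ν⟫| := by
  obtain ⟨C, hC, hoff⟩ := exists_hoffman_bound_two_sided a (P ∪ A)
  refine ⟨C, hC, fun ν => ?_⟩
  -- Constraints on `y`: `⟪a i, y⟫ = 0` for `i ∈ P`, and `⟪a i, y⟫` between `0` and `⟪a i, ν⟫`
  -- otherwise; `0` satisfies them and `ν` violates them by at most `|⟪a i, ν⟫|` for `i ∈ P`.
  obtain ⟨y, hy, hnorm⟩ := hoff (fun i => if i ∈ P then 0 else min 0 ⟪a i, ν⟫)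
    (fun i => if i ∈ P then 0 else max 0 ⟪a i, ν⟫) (fun i => if i ∈ P then |⟪a i, ν⟫| else 0) ν
    ⟨0, fun i _ => by by_cases hi : i ∈ P <;> simp [hi]⟩
    (fun i _ => by by_cases hi : i ∈ P <;> simp [hi, le_abs_self, neg_le_abs])
  have hP : ∀ i ∈ P, ⟪a i, y⟫ = 0 := fun i hi => by
    simpa [hi, le_antisymm_iff, and_comm] using hy i (Finset.mem_union_left _ hi)
  refine ⟨y, hP, fun i hi => ?_, ?_⟩
  · rw [inner_sub_right]
    by_cases hiP : i ∈ P
    · simp [hP i hiP]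
    · have hyi := hy i (Finset.mem_union_right _ hi)
      simp only [if_neg hiP] at hyi
      exact abs_add_abs_sub_eq_abs hyi
  · rwa [Finset.sum_ite_mem, Finset.union_inter_cancel_left] at hnorm

end Polyhedron

section Homogeneous

variable {E : Type*}

def PosHomogeneous [SMul ℝ E] (f : E → ℝ) : Prop :=
  ∀ t : ℝ, 0 ≤ t → ∀ x, f (t • x) = t * f x

variable [AddCommGroup E] [Module ℝ E] {f g : E → ℝ}

theorem PosHomogeneous.map_zero (hf : PosHomogeneous f) : f 0 = 0 := by
  simpa using hf 0 le_rfl 0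

theorem ConvexOn.add_le_of_posHomogeneous (hf : ConvexOn ℝ Set.univ f) (hh : PosHomogeneous f)
    (x y : E) : f (x + y) ≤ f x + f y := by
  have hmid := hf.2 (Set.mem_univ x) (Set.mem_univ y) (by norm_num : (0 : ℝ) ≤ 1 / 2)
    (by norm_num : (0 : ℝ) ≤ 1 / 2) (by norm_num)
  have hxy : x + y = (2 : ℝ) • ((1 / 2 : ℝ) • x + (1 / 2 : ℝ) • y) := by
    rw [smul_add, smul_smul, smul_smul]; norm_num
  rw [hxy, hh 2 (by norm_num)]
  simp only [smul_eq_mul] at hmid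
  linarith

theorem PosHomogeneous.abs_sub_le_mul_norm {E : Type*} [NormedAddCommGroup E] [NormedSpace ℝ E]
    {f g : E → ℝ} (hf : PosHomogeneous f) (hg : PosHomogeneous g) {δ : ℝ}
    (h : ∀ x, ‖x‖ = 1 → |f x - g x| < δ) (x : E) : |f x - g x| ≤ δ * ‖x‖ := by
  rcases eq_or_ne x 0 with rfl | hx
  · simp [hf.map_zero, hg.map_zero]
  have hnorm : 0 < ‖x‖ := norm_pos_iff.2 hx
  have hunit := h (‖x‖⁻¹ • x) (by rw [norm_smul, norm_inv, norm_norm, inv_mul_cancel₀ hnorm.ne'])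
  rw [hf _ (inv_nonneg.2 hnorm.le), hg _ (inv_nonneg.2 hnorm.le), ← mul_sub, abs_mul,
    abs_of_pos (inv_pos.2 hnorm), inv_mul_lt_iff₀ hnorm] at hunit
  linarith

end Homogeneous

theorem eq_one_of_sum_div_card_eq_one {ι : Type*} {s : Finset ι} {f : ι → ℝ}
    (hf : ∀ i ∈ s, f i ≤ 1) (h : (∑ i ∈ s, f i) / s.card = 1) : ∀ i ∈ s, f i = 1 := by
  have hs : (s.card : ℝ) ≠ 0 := fun h0 => by simp [h0] at h
  refine (Finset.sum_eq_sum_iff_of_le hf).1 ?_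
  rw [div_eq_one_iff_eq hs] at h
  simpa using h

section ThetaMin

variable {d : ℕ}

theorem eventually_abs_sub_le_mul_norm {φ : (Fin d → ℝ) → ℝ} {ψ : ℕ → (Fin d → ℝ) → ℝ}
    (hφ : PosHomogeneous φ) (hψ : ∀ n, PosHomogeneous (ψ n))
    (hconv : ∀ δ : ℝ, 0 < δ → ∃ N : ℕ, ∀ n ≥ N,
        ∀ ν : Fin d → ℝ, (∑ k, (ν k) ^ 2) = 1 → |ψ n ν - φ ν| < δ) :
    ∀ δ > 0, ∀ᶠ n in atTop, ∀ ν, |ψ n ν - φ ν| ≤ δ * ‖WithLp.toLp 2 ν‖ := by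
  intro δ hδ
  obtain ⟨N, hN⟩ := hconv δ hδ
  filter_upwards [eventually_ge_atTop N] with n hn ν
  have hhom : ∀ {f : (Fin d → ℝ) → ℝ}, PosHomogeneous f →
      PosHomogeneous (fun x : EuclideanSpace ℝ (Fin d) => f x.ofLp) :=
    fun hf t ht x => by simpa using hf t ht x.ofLp
  refine PosHomogeneous.abs_sub_le_mul_norm (hhom (hψ n)) (hhom hφ) (fun x hx => hN n hn _ ?_)
    (WithLp.toLp 2 ν)
  simpa [hx] using (EuclideanSpace.real_norm_sq_eq x).symm

theorem tendsto_of_abs_sub_le_mul_norm {φ : (Fin d → ℝ) → ℝ} {ψ : ℕ → (Fin d → ℝ) → ℝ}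
    (h : ∀ δ > 0, ∀ᶠ n in atTop, ∀ ν, |ψ n ν - φ ν| ≤ δ * ‖WithLp.toLp 2 ν‖) (ν : Fin d → ℝ) :
    Tendsto (ψ · ν) atTop (𝓝 (φ ν)) := by
  refine Metric.tendsto_nhds.2 fun ε hε => ?_
  set r := ‖WithLp.toLp 2 ν‖
  filter_upwards [h (ε / (r + 1)) (by positivity)] with n hn
  calc dist (ψ n ν) (φ ν) ≤ ε / (r + 1) * r := hn ν
    _ < ε := by
      rw [div_mul_eq_mul_div, div_lt_iff₀ (by positivity)]
      nlinarith [norm_nonneg (WithLp.toLp 2 ν)]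

theorem dotZ_eq_inner (ν : Fin d → ℝ) (ξ : Fin d → ℤ) :
    dotZ ν ξ = ⟪(WithLp.toLp 2 (fun k => (ξ k : ℝ)) : EuclideanSpace ℝ (Fin d)),
      WithLp.toLp 2 ν⟫ := by
  simp [dotZ, PiLp.inner_apply]

theorem dotZ_sub (ν y : Fin d → ℝ) (ξ : Fin d → ℤ) : dotZ (ν - y) ξ = dotZ ν ξ - dotZ y ξ := by
  simp only [dotZ, Pi.sub_apply, sub_mul, Finset.sum_sub_distrib]

theorem exists_conformal_decomposition_dotZ (P A : Finset (Fin d → ℤ)) :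
    ∃ C > 0, ∀ ν : Fin d → ℝ, ∃ y : Fin d → ℝ, (∀ ξ ∈ P, dotZ y ξ = 0) ∧
      (∀ ξ ∈ A, |dotZ y ξ| + |dotZ (ν - y) ξ| = |dotZ ν ξ|) ∧
      ‖WithLp.toLp 2 (ν - y)‖ ≤ C * ∑ ξ ∈ P, |dotZ ν ξ| := by
  obtain ⟨C, hC, hdec⟩ := exists_conformal_decomposition
    (fun ξ : Fin d → ℤ => (WithLp.toLp 2 (fun k => (ξ k : ℝ)) : EuclideanSpace ℝ (Fin d))) P A
  refine ⟨C, hC, fun ν => ?_⟩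
  obtain ⟨y, hP, hA, hnorm⟩ := hdec (WithLp.toLp 2 ν)
  refine ⟨y.ofLp, ?_, ?_, ?_⟩ <;> simpa only [dotZ_eq_inner, WithLp.toLp_sub, WithLp.toLp_ofLp]

variable {V : Finset (Fin d → ℤ)} {α β : (Fin d → ℤ) → ℝ}

noncomputable def upperH (V : Finset (Fin d → ℤ)) (α β θξ : (Fin d → ℤ) → ℝ) (ν : Fin d → ℝ) : ℝ :=
  ∑ ξ ∈ V, (θξ ξ * β ξ + (1 - θξ ξ) * α ξ) * |dotZ ν ξ|

namespace memH

variable {s : ℝ} {φ : (Fin d → ℝ) → ℝ}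

theorem posHomogeneous (h : memH V α β s φ) : PosHomogeneous φ := h.2.2.1

theorem add_le (h : memH V α β s φ) (x y : Fin d → ℝ) : φ (x + y) ≤ φ x + φ y :=
  h.2.1.add_le_of_posHomogeneous h.posHomogeneous x y

theorem lower_le (h : memH V α β s φ) (ν : Fin d → ℝ) :
    ∑ ξ ∈ V, α ξ * |dotZ ν ξ| ≤ φ ν := by
  obtain ⟨-, -, -, _, -, -, hb⟩ := h
  exact (hb ν).1

theorem of_le_upperH (h : memH V α β s φ) {s' : ℝ} {θξ : (Fin d → ℤ) → ℝ}
    (hθ : ∀ ξ ∈ V, θξ ξ ∈ Set.Icc (0 : ℝ) 1) (havg : (∑ ξ ∈ V, θξ ξ) / V.card = s')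
    (hle : ∀ ν, φ ν ≤ upperH V α β θξ ν) : memH V α β s' φ :=
  ⟨h.1, h.2.1, h.2.2.1, θξ, hθ, havg, fun ν => ⟨h.lower_le ν, hle ν⟩⟩

theorem card_ne_zero (h : memH V α β 1 φ) : (V.card : ℝ) ≠ 0 := by
  obtain ⟨-, -, -, _, -, havg, -⟩ := h
  intro h0
  simp [h0] at havg

theorem le_sum_beta (h : memH V α β 1 φ) (ν : Fin d → ℝ) : φ ν ≤ ∑ ξ ∈ V, β ξ * |dotZ ν ξ| := by
  obtain ⟨-, -, -, θξ, hθ, havg, hb⟩ := h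
  have hone := eq_one_of_sum_div_card_eq_one (fun ξ hξ => (hθ ξ hξ).2) havg
  refine (hb ν).2.trans_eq (Finset.sum_congr rfl fun ξ hξ => ?_)
  rw [hone ξ hξ]
  ring

end memH

theorem le_upperH_of_split {ψ : (Fin d → ℝ) → ℝ} {θξ : (Fin d → ℤ) → ℝ} {t : ℝ}
    (hψ : memH V α β 1 ψ) (hθ : ∀ ξ ∈ V, θξ ξ ≤ 1) {ν y : Fin d → ℝ}
    (hy : ∀ ξ ∈ V, θξ ξ < 1 → dotZ y ξ = 0)
    (hconf : ∀ ξ ∈ V, |dotZ y ξ| + |dotZ (ν - y) ξ| = |dotZ ν ξ|)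
    (hrest : ψ (ν - y) ≤
      upperH V α β θξ (ν - y) + t * ∑ ξ ∈ V, (1 - θξ ξ) * (β ξ - α ξ) * |dotZ ν ξ|) :
    ψ ν ≤ upperH V α β (fun ξ => θξ ξ + t * (1 - θξ ξ)) ν := by
  have hterm : ∀ ξ ∈ V, β ξ * |dotZ y ξ| +
      ((θξ ξ * β ξ + (1 - θξ ξ) * α ξ) * |dotZ (ν - y) ξ| +
        t * ((1 - θξ ξ) * (β ξ - α ξ) * |dotZ ν ξ|)) =
      ((θξ ξ + t * (1 - θξ ξ)) * β ξ + (1 - (θξ ξ + t * (1 - θξ ξ))) * α ξ) * |dotZ ν ξ| := by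
    intro ξ hξ
    rcases (hθ ξ hξ).lt_or_eq with hlt | heq
    · rw [dotZ_sub, hy ξ hξ hlt, sub_zero, abs_zero]
      ring
    · rw [heq, ← hconf ξ hξ]
      ring
  calc ψ ν = ψ (y + (ν - y)) := by rw [add_sub_cancel]
    _ ≤ ψ y + ψ (ν - y) := hψ.add_le _ _
    _ ≤ ∑ ξ ∈ V, β ξ * |dotZ y ξ| + (upperH V α β θξ (ν - y) +
        t * ∑ ξ ∈ V, (1 - θξ ξ) * (β ξ - α ξ) * |dotZ ν ξ|) := add_le_add (hψ.le_sum_beta y) hrest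
    _ = upperH V α β (fun ξ => θξ ξ + t * (1 - θξ ξ)) ν := by
      simp only [upperH, Finset.mul_sum, ← Finset.sum_add_distrib]
      exact Finset.sum_congr rfl hterm

theorem memH_of_tendsto {θ₀ s : ℝ} {sₙ : ℕ → ℝ} {φ : (Fin d → ℝ) → ℝ}
    {ψ : ℕ → (Fin d → ℝ) → ℝ} (hφ : memH V α β θ₀ φ) (hψ : ∀ n, memH V α β (sₙ n) (ψ n))
    (hs : Tendsto sₙ atTop (𝓝 s)) (hψφ : ∀ ν, Tendsto (ψ · ν) atTop (𝓝 (φ ν))) :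
    memH V α β s φ := by
  choose θₙ hθₙ havgₙ hbₙ using fun n => (hψ n).2.2.2
  obtain ⟨L, hL, g, hg, hgL⟩ := (isCompact_univ_pi fun _ : V => isCompact_Icc).tendsto_subseq
    (x := fun n (ξ : V) => θₙ n ξ) fun n ξ _ => hθₙ n ξ ξ.2
  set θ : (Fin d → ℤ) → ℝ := fun ξ => if hξ : ξ ∈ V then L ⟨ξ, hξ⟩ else 0
  have hlim : ∀ ξ ∈ V, Tendsto (fun n => θₙ (g n) ξ) atTop (𝓝 (θ ξ)) := fun ξ hξ => by
    simpa [θ, hξ] using tendsto_pi_nhds.1 hgL ⟨ξ, hξ⟩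
  refine hφ.of_le_upperH (θξ := θ) (fun ξ hξ => ?_) ?_ fun ν => ?_
  · simpa [θ, hξ] using hL ⟨ξ, hξ⟩ (Set.mem_univ _)
  · refine tendsto_nhds_unique ((tendsto_finsetSum V hlim).div_const _) ?_
    exact (hs.comp hg.tendsto_atTop).congr fun n => (havgₙ (g n)).symm
  · refine le_of_tendsto_of_tendsto' ((hψφ ν).comp hg.tendsto_atTop)
      (tendsto_finsetSum V fun ξ hξ => ?_) fun n => (hbₙ (g n) ν).2
    exact ((((hlim ξ hξ).mul_const _).add ((tendsto_const_nhds.sub (hlim ξ hξ)).mul_const _))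
      |>.mul_const _)

theorem thetaMin_le {s : ℝ} {φ : (Fin d → ℝ) → ℝ} (hs : s ∈ Set.Icc (0 : ℝ) 1)
    (hφ : memH V α β s φ) : thetaMin V α β φ ≤ s :=
  csInf_le ⟨0, fun _ h => h.1.1⟩ ⟨hs, hφ⟩

theorem thetaMin_mem {φ : (Fin d → ℝ) → ℝ} (hφ : memH V α β 1 φ) :
    thetaMin V α β φ ∈ Set.Icc (0 : ℝ) 1 ∧ memH V α β (thetaMin V α β φ) φ := by
  have hclosed : IsClosed {s : ℝ | s ∈ Set.Icc (0 : ℝ) 1 ∧ memH V α β s φ} :=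
    IsSeqClosed.isClosed fun sₙ s hsₙ hs =>
      ⟨isClosed_Icc.mem_of_tendsto hs (Eventually.of_forall fun n => (hsₙ n).1),
        memH_of_tendsto hφ (fun n => (hsₙ n).2) hs fun _ => tendsto_const_nhds⟩
  exact hclosed.csInf_mem ⟨1, ⟨zero_le_one, le_rfl⟩, hφ⟩ ⟨0, fun _ h => h.1.1⟩

theorem eventually_le_upperH_raise (hαβ : ∀ ξ ∈ V, α ξ < β ξ) {θs : (Fin d → ℤ) → ℝ}
    (hθs : ∀ ξ ∈ V, θs ξ ≤ 1) {φ : (Fin d → ℝ) → ℝ} {ψ : ℕ → (Fin d → ℝ) → ℝ}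
    (hφ : ∀ ν, φ ν ≤ upperH V α β θs ν) (hψ : ∀ n, memH V α β 1 (ψ n))
    (hclose : ∀ δ > 0, ∀ᶠ n in atTop, ∀ ν, |ψ n ν - φ ν| ≤ δ * ‖WithLp.toLp 2 ν‖)
    {t : ℝ} (ht : 0 < t) :
    ∀ᶠ n in atTop, ∀ ν, ψ n ν ≤ upperH V α β (fun ξ => θs ξ + t * (1 - θs ξ)) ν := by
  set P := V.filter (θs · < 1)
  set gap : (Fin d → ℤ) → ℝ := fun ξ => (1 - θs ξ) * (β ξ - α ξ)
  obtain ⟨m, hm, hm0⟩ : ∃ m, (∀ ξ ∈ P, m ≤ gap ξ) ∧ 0 < m := by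
    refine (((eventually_all_finset P).2 fun ξ hξ => ?_).and self_mem_nhdsWithin).exists
      (f := 𝓝[>] (0 : ℝ))
    obtain ⟨hξV, hξ⟩ := Finset.mem_filter.1 hξ
    exact nhdsWithin_le_nhds
      (eventually_le_nhds (mul_pos (sub_pos.2 hξ) (sub_pos.2 (hαβ ξ hξV))))
  have hgap : ∀ ν, m * ∑ ξ ∈ P, |dotZ ν ξ| ≤ ∑ ξ ∈ V, gap ξ * |dotZ ν ξ| := fun ν => by
    rw [Finset.mul_sum]
    refine (Finset.sum_le_sum fun ξ hξ => mul_le_mul_of_nonneg_right (hm ξ hξ) (abs_nonneg _)).trans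
      (Finset.sum_le_sum_of_subset_of_nonneg (Finset.filter_subset _ _) fun ξ hξ _ => ?_)
    exact mul_nonneg (mul_nonneg (sub_nonneg.2 (hθs ξ hξ)) (sub_nonneg.2 (hαβ ξ hξ).le))
      (abs_nonneg _)
  obtain ⟨C, hC, hdec⟩ := exists_conformal_decomposition_dotZ P V
  filter_upwards [hclose (t * m / C) (by positivity)] with n hn ν
  obtain ⟨y, hyP, hconf, hnorm⟩ := hdec ν
  refine le_upperH_of_split (hψ n) hθs (fun ξ hξ h => hyP ξ (Finset.mem_filter.2 ⟨hξ, h⟩))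
    hconf ?_
  calc ψ n (ν - y) ≤ φ (ν - y) + t * m / C * ‖WithLp.toLp 2 (ν - y)‖ := by
        linarith [le_abs_self (ψ n (ν - y) - φ (ν - y)), hn (ν - y)]
    _ ≤ upperH V α β θs (ν - y) + t * m / C * (C * ∑ ξ ∈ P, |dotZ ν ξ|) := by
        gcongr
        exact hφ _
    _ = upperH V α β θs (ν - y) + t * (m * ∑ ξ ∈ P, |dotZ ν ξ|) := by
        field_simp
    _ ≤ upperH V α β θs (ν - y) + t * ∑ ξ ∈ V, gap ξ * |dotZ ν ξ| := by
        gcongr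
        exact hgap ν

theorem eventually_memH_of_lt (hαβ : ∀ ξ ∈ V, α ξ < β ξ) {θ θ' : ℝ} {φ : (Fin d → ℝ) → ℝ}
    {ψ : ℕ → (Fin d → ℝ) → ℝ} (hφ : memH V α β θ φ) (hθ : θ < θ') (hθ' : θ' ≤ 1)
    (hψ : ∀ n, memH V α β 1 (ψ n))
    (hclose : ∀ δ > 0, ∀ᶠ n in atTop, ∀ ν, |ψ n ν - φ ν| ≤ δ * ‖WithLp.toLp 2 ν‖) :
    ∀ᶠ n in atTop, memH V α β θ' (ψ n) := by
  obtain ⟨θs, hθs, havg, hb⟩ := hφ.2.2.2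
  set t := (θ' - θ) / (1 - θ)
  have hθ1 : 0 < 1 - θ := sub_pos.2 (hθ.trans_le hθ')
  have ht0 : 0 < t := div_pos (sub_pos.2 hθ) hθ1
  have ht1 : t ≤ 1 := (div_le_one hθ1).2 (by linarith)
  have havg' : (∑ ξ ∈ V, (θs ξ + t * (1 - θs ξ))) / V.card = θ' := by
    have hcard := (hψ 0).card_ne_zero
    have ht : t * (1 - θ) = θ' - θ := div_mul_cancel₀ _ hθ1.ne'
    rw [div_eq_iff hcard] at havg ⊢
    rw [Finset.sum_add_distrib, ← Finset.mul_sum, Finset.sum_sub_distrib, havg, Finset.sum_const,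
      nsmul_eq_mul, mul_one]
    linear_combination (V.card : ℝ) * ht
  have hθt : ∀ ξ ∈ V, θs ξ + t * (1 - θs ξ) ∈ Set.Icc (0 : ℝ) 1 := fun ξ hξ => by
    obtain ⟨h0, h1⟩ := hθs ξ hξ
    constructor <;> nlinarith
  filter_upwards [eventually_le_upperH_raise hαβ (fun ξ hξ => (hθs ξ hξ).2)
    (fun ν => (hb ν).2) hψ hclose ht0] with n hn
  exact (hψ n).of_le_upperH hθt havg' hn

theorem eventually_lt_thetaMin {φ : (Fin d → ℝ) → ℝ} {ψ : ℕ → (Fin d → ℝ) → ℝ}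
    (hφ : memH V α β 1 φ) (hψ : ∀ n, memH V α β 1 (ψ n))
    (hψφ : ∀ ν, Tendsto (ψ · ν) atTop (𝓝 (φ ν))) {t : ℝ} (ht : t < thetaMin V α β φ) :
    ∀ᶠ n in atTop, t < thetaMin V α β (ψ n) := by
  by_contra hcon
  obtain ⟨g, hg, hgt⟩ := extraction_of_frequently_atTop
    ((not_eventually.1 hcon).mono fun _ h => not_lt.1 h)
  obtain ⟨s, hs, g', hg', hlim⟩ := isCompact_Icc.tendsto_subseq
    fun k => (thetaMin_mem (hψ (g k))).1
  have hmem : memH V α β s φ := memH_of_tendsto hφ (fun k => (thetaMin_mem (hψ (g (g' k)))).2)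
    hlim fun ν => (hψφ ν).comp (hg.comp hg').tendsto_atTop
  have hst : s ≤ t := le_of_tendsto' hlim fun k => hgt (g' k)
  exact (thetaMin_le hs hmem).not_gt (hst.trans_lt ht)

theorem eventually_thetaMin_lt (hαβ : ∀ ξ ∈ V, α ξ < β ξ) {φ : (Fin d → ℝ) → ℝ}
    {ψ : ℕ → (Fin d → ℝ) → ℝ} (hφ : memH V α β 1 φ) (hψ : ∀ n, memH V α β 1 (ψ n))
    (hclose : ∀ δ > 0, ∀ᶠ n in atTop, ∀ ν, |ψ n ν - φ ν| ≤ δ * ‖WithLp.toLp 2 ν‖) {t : ℝ}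
    (ht : thetaMin V α β φ < t) : ∀ᶠ n in atTop, thetaMin V α β (ψ n) < t := by
  obtain ⟨⟨hT0, hT1⟩, hT⟩ := thetaMin_mem hφ
  rcases hT1.lt_or_eq with hT1 | hT1
  · set θ' := min ((thetaMin V α β φ + t) / 2) 1
    have hθ' : thetaMin V α β φ < θ' := lt_min (by linarith) hT1
    filter_upwards [eventually_memH_of_lt hαβ hT hθ' (min_le_right _ _) hψ hclose] with n hn
    exact (thetaMin_le ⟨hT0.trans hθ'.le, min_le_right _ _⟩ hn).trans_lt
      ((min_le_left _ _).trans_lt (by linarith))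
  · exact Eventually.of_forall fun n =>
      (thetaMin_le ⟨zero_le_one, le_rfl⟩ (hψ n)).trans_lt (hT1 ▸ ht)

end ThetaMin

theorem thetaMin_continuous_general {d : ℕ} (V : Finset (Fin d → ℤ))
    (α β : (Fin d → ℤ) → ℝ) (hαβ : ∀ ξ ∈ V, 0 < α ξ ∧ α ξ < β ξ)
    (φ : (Fin d → ℝ) → ℝ) (φn : ℕ → (Fin d → ℝ) → ℝ)
    (hφ : memH V α β 1 φ) (hφn : ∀ n, memH V α β 1 (φn n))
    (hconv : ∀ δ : ℝ, 0 < δ → ∃ N : ℕ, ∀ n ≥ N,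
        ∀ ν : Fin d → ℝ, (∑ k, (ν k) ^ 2) = 1 → |φn n ν - φ ν| < δ) :
    Filter.Tendsto (fun n => thetaMin V α β (φn n)) Filter.atTop
      (nhds (thetaMin V α β φ)) := by
  have hclose := eventually_abs_sub_le_mul_norm hφ.posHomogeneous
    (fun n => (hφn n).posHomogeneous) hconv
  exact tendsto_order.2
    ⟨fun t ht => eventually_lt_thetaMin hφ hφn (tendsto_of_abs_sub_le_mul_norm hclose) ht,
      fun t ht => eventually_thetaMin_lt (fun ξ hξ => (hαβ ξ hξ).2) hφ hφn hclose ht⟩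

/-- If `φₙ, φ ∈ H_{α,β,V}(1)` and `φₙ → φ` uniformly on the unit
sphere, then `θ_{φₙ} → θ_φ`. -/
theorem thetaMin_continuous {d : ℕ} (V : Finset (Fin d → ℤ)) (hV : V.Nonempty)
    (α β : (Fin d → ℤ) → ℝ) (hαβ : ∀ ξ ∈ V, 0 < α ξ ∧ α ξ < β ξ)
    (φ : (Fin d → ℝ) → ℝ) (φn : ℕ → (Fin d → ℝ) → ℝ)
    (hφ : memH V α β 1 φ) (hφn : ∀ n, memH V α β 1 (φn n))
    (hconv : ∀ δ : ℝ, 0 < δ → ∃ N : ℕ, ∀ n ≥ N,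
        ∀ ν : Fin d → ℝ, (∑ k, (ν k) ^ 2) = 1 → |φn n ν - φ ν| < δ) :
    Filter.Tendsto (fun n => thetaMin V α β (φn n)) Filter.atTop
      (nhds (thetaMin V α β φ)) :=
  thetaMin_continuous_general V α β hαβ φ φn hφ hφn hconv
end

section
/- Let $u\in\mathcal{PC}_\varepsilon(\mathbb{R}^d)$ (piecewise constant on the lattice $\varepsilon\mathbb{Z}^d$) be such that $u-\langle\nu,x\rangle$ is 1-periodic, and let $c^\varepsilon_{i,\xi}$ be $(1/\varepsilon)$-periodic nonnegative coefficients. For $\eta=1/M$ with $M\in\mathbb{N}$, define $\tilde u\in\mathcal{PC}_{\varepsilon\eta}(\mathbb{R}^d)$ by $\tilde u(z)=\eta\,u(z/\eta)$. Then $\tilde u-\langle\nu,x\rangle$ is 1-periodic and $\sum_{\xi\in V}\sum_{i\in([-1/2,1/2)^d)_{\varepsilon\eta}}(\varepsilon\eta)^{d-1}c^\varepsilon_{i,\xi}|\tilde u_{\varepsilon\eta i}-\tilde u_{\varepsilon\eta(i+\xi)}|\le\sum_{\xi\in V}\sum_{i\in([-1/2,1/2)^d)_\varepsilon}\varepsilon^{d-1}c^\varepsilon_{i,\xi}|u_{\varepsilon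 i}-u_{\varepsilon(i+\xi)}|$. -/
open Finset
open scoped Classical

/-- The lattice points `i ∈ ℤ^d` with `i/N ∈ [-1/2, 1/2)^d`, i.e. `-N ≤ 2 i_k < N`. -/
noncomputable def cellZ (d N : ℕ) : Finset (Fin d → ℤ) :=
  (Fintype.piFinset fun _ : Fin d => Finset.Ico (-(N : ℤ)) (N : ℤ)).filter
    (fun i => ∀ k, -(N : ℤ) ≤ 2 * i k ∧ 2 * i k < (N : ℤ))

/-- The discrete 1-homogeneous cell energy at scale `ε = 1/N`:
`∑_{ξ ∈ V} ∑_{i ∈ ([-1/2,1/2)^d)_ε} ε^{d-1} c_{i,ξ} |u_{εi} - u_{ε(i+ξ)}|`,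
where `u i` denotes the value of the lattice function at the point `i/N`. -/
noncomputable def cellEnergy {d : ℕ} (V : Finset (Fin d → ℤ)) (N : ℕ)
    (c : (Fin d → ℤ) → (Fin d → ℤ) → ℝ) (u : (Fin d → ℤ) → ℝ) : ℝ :=
  ∑ ξ ∈ V, ∑ i ∈ cellZ d N, ((1 : ℝ) / N) ^ (d - 1) * c i ξ * |u i - u (i + ξ)|

/-!
The bond energy `c i ξ * |u i - u (i + ξ)|` is `N`-periodic in `i`: `c` is periodic and both
values of `u` shift by the same `ν k` along a period. Reduction modulo `N` is a bijection between
any two lattice boxes of side `N`, so a periodic function has the same sum over all of them, and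
the cell at scale `1/(NM)` is a box of side `NM` tiled by `M^d` boxes of side `N`. Hence the
rescaled energy is `(1/M) * (1/M)^(d-1) * M^d` times the original one: the factor is `1` for
`d ≥ 1` and `1/M` for `d = 0`, where `d - 1` truncates to `0`.
-/

open Function

theorem Int.add_emod_sub_eq_of_mem_Ico {a b x n : ℤ} (hx : a ≤ x ∧ x < a + n) :
    a + (b + (x - b) % n - a) % n = x := by
  have h : b + (x - b) % n - a = (x - a) + n * -((x - b) / n) := by
    rw [Int.emod_def]; ring
  rw [h, Int.add_mul_emod_self_left, Int.emod_eq_of_lt (by omega) (by omega)]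
  ring

section LatticeBox

variable {ι : Type*}

def reprMod (b : ι → ℤ) (n : ℤ) (i : ι → ℤ) : ι → ℤ := fun k => b k + (i k - b k) % n

theorem apply_reprMod_of_periodic {α : Type*} {f : (ι → ℤ) → α} {n : ℤ}
    (hf : ∀ q, Periodic f (n • q)) (b i : ι → ℤ) : f (reprMod b n i) = f i := by
  have hi : reprMod b n i + n • (fun k => (i k - b k) / n) = i := by
    ext k
    simp only [reprMod, Pi.add_apply, Pi.smul_apply, smul_eq_mul]
    linarith [Int.emod_add_mul_ediv (i k - b k) n]
  rw [← hf _ (reprMod b n i), hi]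

variable [Fintype ι] [DecidableEq ι]

theorem periodic_smul_of_periodic_single {α : Type*} {f : (ι → ℤ) → α} {n : ℤ}
    (hf : ∀ k, Periodic f (n • Pi.single k 1)) (q : ι → ℤ) : Periodic f (n • q) := by
  have hq : n • q = ∑ k, q k • n • Pi.single k (1 : ℤ) := by
    ext j
    simp [Finset.sum_apply, Pi.single_apply, mul_comm]
  rw [hq]
  exact sum_induction _ (Periodic f) (fun _ _ => Periodic.add_period)
    (by simp [Periodic]) fun k _ => (hf k).zsmul (q k)

noncomputable def latticeBox (a : ι → ℤ) (K : ℕ) : Finset (ι → ℤ) :=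
  Fintype.piFinset fun k => Ico (a k) (a k + K)

theorem mem_latticeBox {a i : ι → ℤ} {K : ℕ} :
    i ∈ latticeBox a K ↔ ∀ k, a k ≤ i k ∧ i k < a k + K := by
  simp [latticeBox]

theorem card_latticeBox (a : ι → ℤ) (K : ℕ) : #(latticeBox a K) = K ^ Fintype.card ι := by
  simp [latticeBox, Fintype.card_piFinset]

theorem reprMod_mem_latticeBox (b i : ι → ℤ) {N : ℕ} (hN : 0 < N) :
    reprMod b N i ∈ latticeBox b N := by
  have hN' : (0 : ℤ) < N := by exact_mod_cast hN
  refine mem_latticeBox.2 fun k => ⟨?_, ?_⟩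
  · simpa [reprMod] using Int.emod_nonneg (i k - b k) hN'.ne'
  · simpa [reprMod] using Int.emod_lt_of_pos (i k - b k) hN'

theorem reprMod_reprMod_of_mem (a b : ι → ℤ) {N : ℕ} {i : ι → ℤ} (hi : i ∈ latticeBox a N) :
    reprMod a N (reprMod b N i) = i :=
  funext fun k => Int.add_emod_sub_eq_of_mem_Ico (mem_latticeBox.1 hi k)

theorem sum_latticeBox_eq_of_periodic {β : Type*} [AddCommMonoid β] {f : (ι → ℤ) → β}
    {N : ℕ} (hN : 0 < N) (hf : ∀ q, Periodic f ((N : ℤ) • q)) (a b : ι → ℤ) :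
    ∑ i ∈ latticeBox a N, f i = ∑ i ∈ latticeBox b N, f i :=
  sum_nbij' (reprMod b N) (reprMod a N) (fun i _ => reprMod_mem_latticeBox b i hN)
    (fun i _ => reprMod_mem_latticeBox a i hN) (fun _ hi => reprMod_reprMod_of_mem a b hi)
    (fun _ hi => reprMod_reprMod_of_mem b a hi) fun i _ => (apply_reprMod_of_periodic hf b i).symm

theorem filter_latticeBox_mul_ediv_eq {N M : ℕ} (hN : 0 < N) (a : ι → ℤ) {q : ι → ℤ}
    (hq : q ∈ latticeBox 0 M) :
    {i ∈ latticeBox a (N * M) | (fun k => (i k - a k) / N) = q} =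
      latticeBox (a + (N : ℤ) • q) N := by
  have hN' : (0 : ℤ) < N := by exact_mod_cast hN
  ext i
  simp only [mem_filter, mem_latticeBox, funext_iff, Int.ediv_eq_iff_of_pos hN', Pi.add_apply,
    Pi.smul_apply, smul_eq_mul, ← forall_and]
  refine forall_congr' fun k => ?_
  have := (mem_latticeBox.1 hq) k
  simp only [Pi.zero_apply, zero_add] at this
  push_cast
  constructor
  · rintro ⟨-, h1, h2⟩; constructor <;> linarith
  · rintro ⟨h1, h2⟩
    have : q k * N + N ≤ M * N := by nlinarith
    refine ⟨⟨?_, ?_⟩, ?_, ?_⟩ <;> nlinarith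

theorem sum_latticeBox_mul_of_periodic {β : Type*} [AddCommMonoid β] {f : (ι → ℤ) → β}
    {N : ℕ} (hN : 0 < N) (hf : ∀ q, Periodic f ((N : ℤ) • q)) (M : ℕ) (a b : ι → ℤ) :
    ∑ i ∈ latticeBox a (N * M), f i = (M ^ Fintype.card ι) • ∑ i ∈ latticeBox b N, f i := by
  have hN' : (0 : ℤ) < N := by exact_mod_cast hN
  have hmaps : ∀ i ∈ latticeBox a (N * M), (fun k => (i k - a k) / N) ∈ latticeBox 0 M := by
    intro i hi
    refine mem_latticeBox.2 fun k => ?_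
    have := mem_latticeBox.1 hi k
    simp only [Pi.zero_apply, zero_add]
    push_cast at this
    exact ⟨Int.ediv_nonneg (by linarith) hN'.le, (Int.ediv_lt_iff_lt_mul hN').2 (by linarith)⟩
  calc ∑ i ∈ latticeBox a (N * M), f i
      = ∑ q ∈ latticeBox 0 M, ∑ i ∈ latticeBox (a + (N : ℤ) • q) N, f i := by
        rw [← sum_fiberwise_of_maps_to hmaps]
        exact sum_congr rfl fun q hq => by rw [filter_latticeBox_mul_ediv_eq hN a hq]
    _ = ∑ q ∈ latticeBox 0 M, ∑ i ∈ latticeBox b N, f i :=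
        sum_congr rfl fun q _ => sum_latticeBox_eq_of_periodic hN hf _ b
    _ = (M ^ Fintype.card ι) • ∑ i ∈ latticeBox b N, f i := by
        rw [sum_const, card_latticeBox]

end LatticeBox

theorem cellZ_eq_latticeBox (d N : ℕ) : cellZ d N = latticeBox (fun _ => -((N : ℤ) / 2)) N := by
  ext i
  simp only [cellZ, mem_filter, Fintype.mem_piFinset, mem_Ico, mem_latticeBox]
  exact ⟨fun h k => by have := h.2 k; omega,
    fun h => ⟨fun k => by have := h k; omega, fun k => by have := h k; omega⟩⟩

section CellEnergy

variable {d : ℕ} (V : Finset (Fin d → ℤ)) (c : (Fin d → ℤ) → (Fin d → ℤ) → ℝ)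

theorem cellEnergy_nonneg (hc : ∀ i ξ, 0 ≤ c i ξ) (N : ℕ) (u : (Fin d → ℤ) → ℝ) :
    0 ≤ cellEnergy V N c u :=
  sum_nonneg fun ξ _ => sum_nonneg fun i _ => by have := hc i ξ; positivity

theorem cellEnergy_const_mul (N : ℕ) (a : ℝ) (u : (Fin d → ℤ) → ℝ) :
    cellEnergy V N c (fun i => a * u i) = |a| * cellEnergy V N c u := by
  simp only [cellEnergy, mul_sum, ← mul_sub, abs_mul]
  exact sum_congr rfl fun ξ _ => sum_congr rfl fun i _ => by ring

theorem cellEnergy_mul_of_periodic {N : ℕ} (hN : 0 < N) {u : (Fin d → ℤ) → ℝ}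
    (hbond : ∀ ξ q, Periodic (fun i => c i ξ * |u i - u (i + ξ)|) ((N : ℤ) • q)) (M : ℕ) :
    cellEnergy V (N * M) c u = (1 / (M : ℝ)) ^ (d - 1) * M ^ d * cellEnergy V N c u := by
  simp only [cellEnergy, mul_sum]
  refine sum_congr rfl fun ξ _ => ?_
  simp only [mul_assoc, ← mul_sum]
  rw [cellZ_eq_latticeBox, cellZ_eq_latticeBox,
    sum_latticeBox_mul_of_periodic hN (hbond ξ) M _ (fun _ => -((N : ℤ) / 2))]
  simp only [Fintype.card_fin, nsmul_eq_mul]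
  push_cast
  rw [← one_div_mul_one_div, mul_pow]
  ring

end CellEnergy

/-- Let `u ∈ PC_ε(ℝ^d)`, `ε = 1/N`, with `u - ⟨ν,x⟩` 1-periodic, and
let the coefficients `c_{i,ξ} ≥ 0` be `(1/ε) = N`-periodic. For `η = 1/M`, the rescaled
configuration `ũ(z) = η u(z/η)` (i.e. `ũ_j = η u_j` as a lattice function at scale `εη`)
satisfies: `ũ - ⟨ν,x⟩` is 1-periodic at scale `εη`, and its `εη`-cell energy does not
exceed the `ε`-cell energy of `u`. -/
theorem rescaled_cell_energy_le {d : ℕ} (V : Finset (Fin d → ℤ))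
    (N M : ℕ) (hN : 0 < N) (hM : 0 < M)
    (c : (Fin d → ℤ) → (Fin d → ℤ) → ℝ) (hc : ∀ i ξ, 0 ≤ c i ξ)
    (hper : ∀ (i ξ : Fin d → ℤ) (k : Fin d),
      c (i + (N : ℤ) • Pi.single k 1) ξ = c i ξ)
    (ν : Fin d → ℝ) (u : (Fin d → ℤ) → ℝ)
    (huper : ∀ (i : Fin d → ℤ) (k : Fin d),
      u (i + (N : ℤ) • Pi.single k 1) = u i + ν k) :
    (∀ (i : Fin d → ℤ) (k : Fin d),
      ((1 : ℝ) / M) * u (i + ((N * M : ℕ) : ℤ) • Pi.single k 1) =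
        (1 : ℝ) / M * u i + ν k) ∧
    cellEnergy V (N * M) c (fun i => ((1 : ℝ) / M) * u i) ≤
      cellEnergy V N c u := by
  refine ⟨fun i k => ?_, ?_⟩
  · have hu := AddConstMapClass.map_add_nsmul
      (⟨u, fun i => huper i k⟩ : AddConstMap _ _ ((N : ℤ) • Pi.single k 1) (ν k)) i M
    rw [AddConstMap.coe_mk, ← natCast_zsmul, smul_smul, nsmul_eq_mul] at hu
    rw [show (((N * M : ℕ) : ℤ)) = M * N by push_cast; ring, hu]
    field_simp
  · have hbond : ∀ ξ q, Periodic (fun i => c i ξ * |u i - u (i + ξ)|) ((N : ℤ) • q) := by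
      refine fun ξ => periodic_smul_of_periodic_single fun k i => ?_
      simp only [add_right_comm i _ ξ, hper, huper, add_sub_add_right_eq_sub]
    have hscale : |1 / (M : ℝ)| * ((1 / (M : ℝ)) ^ (d - 1) * M ^ d) ≤ 1 := by
      rw [abs_of_pos (by positivity), ← mul_assoc, ← pow_succ', one_div_pow, one_div_mul_eq_div,
        div_le_one (by positivity)]
      exact pow_le_pow_right₀ (by exact_mod_cast hM) (by omega)
    rw [cellEnergy_const_mul, cellEnergy_mul_of_periodic V c hN hbond, ← mul_assoc]
    simpa using mul_le_mul_of_nonneg_right hscale (cellEnergy_nonneg V c hc N u)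
end
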